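/- Let Q := Λ*(ℝ²) be the real exterior algebra on a basis {a, b}, and let φ: Λ*E → Q be the linear isomorphism with φ(1) = b, φ(ρ) = a, φ(θ) = a∧b, φ(θ̄) = 1. Let [A] be the linear automorphism of ℝ² with [A]a = a and [A]b = b + a, and let [S] be the linear automorphism with [S]a = −b and [S]b = a. Define 𝔸: Λ*E → Λ*E by 𝔸(x) = x·(1+ρ) (right multiplication in 𝒩, which preserves Λ*E), and define 𝕊: Λ*E → Λ*E by 𝕊(1) = ρ, 𝕊(ρ) = −1, 𝕊(θ) = θ, 𝕊(θ̄) = θ̄. Then φ∘𝔸 = Λ*([A])∘φ and φ∘𝕊 = Λ*([S])∘φ, where Λ*(·) denotes the induced algebra automorphism of the exterior algebra Q. -/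

import Mathlib

noncomputable section

open TensorProduct

/-- The quadratic form `q(x₀,x₁,x₂) = x₀²` on `ℝ³`. -/
def Nform : QuadraticForm ℝ (Fin 3 → ℝ) :=
  QuadraticMap.weightedSumSquares ℝ (fun i : Fin 3 => if i = 0 then (1 : ℝ) else 0)

/-- The algebra `𝒩 = ℤ/2 ⋉ Λ*ℝ²`, realized as the Clifford algebra of `Nform`. -/
abbrev NA := CliffordAlgebra Nform

/-- The generator `K`. -/
def K : NA := CliffordAlgebra.ι Nform (Pi.single 0 1)

/-- The generator `θ`. -/
def θ : NA := CliffordAlgebra.ι Nform (Pi.single 1 1)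

/-- The generator `θ̄`. -/
def θb : NA := CliffordAlgebra.ι Nform (Pi.single 2 1)

/-- `ρ := θ̄θ`. -/
def ρ : NA := θb * θ

/-- `Λ*E`, the subalgebra of `𝒩` spanned by `1, θ, θ̄, ρ`. -/
def ΛE : Submodule ℝ NA := Submodule.span ℝ {1, θ, θb, ρ}

/-- `Q := Λ*(ℝ²)`, the real exterior algebra on two generators. -/
abbrev Q := ExteriorAlgebra ℝ (Fin 2 → ℝ)

/-- The basis vector `a` of `ℝ²` inside `Q`. -/
def av : Q := ExteriorAlgebra.ι ℝ (Pi.single 0 1)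

/-- The basis vector `b` of `ℝ²` inside `Q`. -/
def bv : Q := ExteriorAlgebra.ι ℝ (Pi.single 1 1)

/-- The linear automorphism `[A]` of `ℝ²` with `[A]a = a`, `[A]b = b + a`. -/
def Amap : (Fin 2 → ℝ) →ₗ[ℝ] (Fin 2 → ℝ) := Matrix.toLin' !![1, 1; 0, 1]

/-- The linear automorphism `[S]` of `ℝ²` with `[S]a = −b`, `[S]b = a`. -/
def Smap : (Fin 2 → ℝ) →ₗ[ℝ] (Fin 2 → ℝ) := Matrix.toLin' !![0, 1; -1, 0]

lemma theta_sq : θ * θ = 0 := by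
  rw [θ, CliffordAlgebra.ι_sq_scalar]
  simp [Nform, QuadraticMap.weightedSumSquares_apply, Fin.sum_univ_three]
  exact (algebraMap ℝ NA).map_zero

lemma thetab_sq : θb * θb = 0 := by
  rw [θb, CliffordAlgebra.ι_sq_scalar]
  simp [Nform, QuadraticMap.weightedSumSquares_apply, Fin.sum_univ_three]
  exact (algebraMap ℝ NA).map_zero

lemma theta_thetab : θ * θb = -(θb * θ) := by
  rw [θ, θb, CliffordAlgebra.ι_mul_ι_comm]
  have : QuadraticMap.polar Nform (Pi.single 1 1) (Pi.single 2 1) = 0 := by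
    simp [QuadraticMap.polar, Nform, QuadraticMap.weightedSumSquares_apply, Fin.sum_univ_three]
  rw [this]; simp

lemma theta_rho : θ * ρ = 0 := by
  rw [ρ, ← mul_assoc, theta_thetab, neg_mul, mul_assoc, theta_sq, mul_zero, neg_zero]

lemma thetab_rho : θb * ρ = 0 := by
  rw [ρ, ← mul_assoc, thetab_sq, zero_mul]

lemma rho_rho : ρ * ρ = 0 := by
  have h : θ * ρ = 0 := theta_rho
  rw [ρ] at h ⊢
  rw [mul_assoc, h, mul_zero]

lemma hAa : Amap (Pi.single 0 1) = Pi.single 0 1 := by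
  ext i; fin_cases i <;>
  simp [Amap, Matrix.toLin'_apply, Matrix.mulVec, dotProduct, Fin.sum_univ_two]

lemma hAb : Amap (Pi.single 1 1) = Pi.single 1 1 + Pi.single 0 1 := by
  ext i; fin_cases i <;>
  simp [Amap, Matrix.toLin'_apply, Matrix.mulVec, dotProduct, Fin.sum_univ_two]

lemma hSa : Smap (Pi.single 0 1) = -Pi.single 1 1 := by
  ext i; fin_cases i <;>
  simp [Smap, Matrix.toLin'_apply, Matrix.mulVec, dotProduct, Fin.sum_univ_two]

lemma hSb : Smap (Pi.single 1 1) = Pi.single 0 1 := by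
  ext i; fin_cases i <;>
  simp [Smap, Matrix.toLin'_apply, Matrix.mulVec, dotProduct, Fin.sum_univ_two]

lemma mapav_A : (ExteriorAlgebra.map Amap) av = av := by
  rw [av, ExteriorAlgebra.map_apply_ι, hAa]

lemma mapbv_A : (ExteriorAlgebra.map Amap) bv = bv + av := by
  rw [bv, av, ExteriorAlgebra.map_apply_ι, hAb, map_add]

lemma mapav_S : (ExteriorAlgebra.map Smap) av = -bv := by
  rw [av, bv, ExteriorAlgebra.map_apply_ι, hSa, map_neg]

lemma mapbv_S : (ExteriorAlgebra.map Smap) bv = av := by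
  rw [bv, av, ExteriorAlgebra.map_apply_ι, hSb]

lemma av_sq : av * av = 0 := ExteriorAlgebra.ι_sq_zero _
lemma bv_sq : bv * bv = 0 := ExteriorAlgebra.ι_sq_zero _
lemma bv_av : bv * av = -(av * bv) := by
  have := ExteriorAlgebra.ι_add_mul_swap (R := ℝ) (Pi.single 0 1 : Fin 2 → ℝ) (Pi.single 1 1)
  rw [← av, ← bv] at this
  exact eq_neg_of_add_eq_zero_right this

/-- with `φ : Λ*E → Q` the linear isomorphism determined by `φ(1) = b`,
`φ(ρ) = a`, `φ(θ) = a∧b`, `φ(θ̄) = 1`, and with `𝔸(x) = x·(1+ρ)` and `𝕊` defined by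
`𝕊(1) = ρ`, `𝕊(ρ) = −1`, `𝕊(θ) = θ`, `𝕊(θ̄) = θ̄`, one has
`φ∘𝔸 = Λ*([A])∘φ` and `φ∘𝕊 = Λ*([S])∘φ` on `Λ*E`. -/
theorem stmt13
    (φ : NA →ₗ[ℝ] Q)
    (hφ1 : φ 1 = bv) (hφρ : φ ρ = av) (hφθ : φ θ = av * bv) (hφθb : φ θb = 1)
    (𝕊 : NA →ₗ[ℝ] NA)
    (h𝕊1 : 𝕊 1 = ρ) (h𝕊ρ : 𝕊 ρ = -1) (h𝕊θ : 𝕊 θ = θ) (h𝕊θb : 𝕊 θb = θb) :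
    ∀ x ∈ ΛE,
      φ (x * (1 + ρ)) = (ExteriorAlgebra.map Amap) (φ x) ∧
      φ (𝕊 x) = (ExteriorAlgebra.map Smap) (φ x) := by
  intro x hx
  induction hx using Submodule.span_induction with
  | mem x hx =>
    rcases hx with rfl | rfl | rfl | rfl
    · constructor
      · rw [one_mul, map_add, hφ1, hφρ, mapbv_A]
      · rw [h𝕊1, hφρ, hφ1, mapbv_S]
    · constructor
      · rw [mul_add, mul_one, theta_rho, add_zero, hφθ, map_mul, mapav_A, mapbv_A]
        rw [mul_add, av_sq, add_zero]
      · rw [h𝕊θ, hφθ, map_mul, mapav_S, mapbv_S, neg_mul, bv_av, neg_neg]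
    · constructor
      · rw [mul_add, mul_one, thetab_rho, add_zero, hφθb, map_one]
      · rw [h𝕊θb, hφθb, map_one]
    · constructor
      · rw [mul_add, mul_one, rho_rho, add_zero, hφρ, mapav_A]
      · rw [h𝕊ρ, map_neg, hφ1, hφρ, mapav_S]
  | zero => simp
  | add x y _ _ hx hy =>
    refine ⟨?_, ?_⟩ <;> simp [add_mul, hx.1, hy.1, hx.2, hy.2]
  | smul c x _ hx =>
    refine ⟨?_, ?_⟩ <;> simp [smul_mul_assoc, hx.1, hx.2]
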